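/- arXiv:0905.1053 — 2 statements merged into one kernel-verified Lean document; each statement's English description precedes it below -/
import Mathlib

section
/- Let G_1 = (V_1, E_1) be an exactly k-edge-connected multigraph, let v ∈ V_1, and let G be obtained from G_1 by a k-bridge addition at v: add one new vertex u and k parallel edges between u and v. Then G is exactly k-edge-connected. -/
/-! Basic theory of loopless undirected multigraphs. -/

/-- A loopless undirected multigraph on the vertex type `V`: a type of edges
together with a map assigning to each edge its unordered pair of (distinct)
endpoints.  All multigraphs are assumed to have finitely many edges. -/
structure Multigraph (V : Type) where
  Edge : Type
  ends : Edge → Sym2 V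
  loopless : ∀ e, ¬ (ends e).IsDiag
  edge_finite : Finite Edge

namespace Multigraph

open scoped Classical

variable {V : Type}

instance (G : Multigraph V) : Finite G.Edge := G.edge_finite

lemma exists_pair_eq {α : Type} (z : Sym2 α) : ∃ x y, z = s(x, y) := by
  induction z using Sym2.ind with
  | _ x y => exact ⟨x, y, rfl⟩

lemma map_not_isDiag {α β : Type} (f : α → β) (z : Sym2 α)
    (hf : ∀ x ∈ z, ∀ y ∈ z, f x = f y → x = y) (hz : ¬ z.IsDiag) :
    ¬ (z.map f).IsDiag := by
  obtain ⟨x, y, rfl⟩ := exists_pair_eq z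
  rw [Sym2.map_pair_eq, Sym2.mk_isDiag_iff]
  rw [Sym2.mk_isDiag_iff] at hz
  exact fun h => hz (hf x (by simp) y (by simp) h)

/-- Restrict an unordered pair, all of whose members satisfy `P`, to an
unordered pair of elements of the subtype `{x // P x}`. -/
noncomputable def sym2RestrictP {α : Type} (P : α → Prop) (z : Sym2 α) (h : ∀ x ∈ z, P x) :
    Sym2 {x : α // P x} :=
  z.map fun x =>
    if hx : P x then ⟨x, hx⟩
    else Classical.choice (by
      obtain ⟨a, b, rfl⟩ := exists_pair_eq z
      exact ⟨⟨a, h a (by simp)⟩⟩)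

lemma sym2RestrictP_not_isDiag {α : Type} (P : α → Prop) (z : Sym2 α) (h : ∀ x ∈ z, P x)
    (hz : ¬ z.IsDiag) : ¬ (sym2RestrictP P z h).IsDiag := by
  apply map_not_isDiag
  · intro a ha b hb hab
    rw [dif_pos (h a ha), dif_pos (h b hb)] at hab
    exact congrArg Subtype.val hab
  · exact hz

/-- Walks in a multigraph, recorded as alternating sequences of vertices and edges. -/
inductive Walk (G : Multigraph V) : V → V → Type
  | nil (v : V) : Walk G v v
  | cons {u v w : V} (e : G.Edge) (he : G.ends e = s(u, v)) (p : Walk G v w) : Walk G u w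

namespace Walk

variable {G : Multigraph V}

/-- The list of edges used by a walk. -/
def edges : ∀ {u v : V}, G.Walk u v → List G.Edge
  | _, _, nil _ => []
  | _, _, cons e _ p => e :: p.edges

/-- The list of vertices visited by a walk, in order. -/
def support : ∀ {u v : V}, G.Walk u v → List V
  | u, _, nil _ => [u]
  | u, _, cons _ _ p => u :: p.support

end Walk

/-- `G.HasEDP u v k` : there are (at least) `k` pairwise edge-disjoint paths
between `u` and `v` in `G` (formalized as `k` pairwise edge-disjoint trails,
which is equivalent). -/
def HasEDP (G : Multigraph V) (u v : V) (k : ℕ) : Prop :=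
  ∃ P : Fin k → G.Walk u v,
    (∀ i, (P i).edges.Nodup) ∧
    ∀ i j, i ≠ j → ∀ e, e ∈ (P i).edges → e ∉ (P j).edges

/-- `G` is `k`-edge-connected: between any two distinct vertices there are at
least `k` pairwise edge-disjoint paths. -/
def EdgeConnected (G : Multigraph V) (k : ℕ) : Prop :=
  Nontrivial V ∧ ∀ u v : V, u ≠ v → G.HasEDP u v k

/-- `G` is exactly `k`-edge-connected: between any two distinct vertices there
are exactly `k` pairwise edge-disjoint paths (at least `k`, and not `k + 1`). -/
def ExactlyEdgeConnected (G : Multigraph V) (k : ℕ) : Prop :=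
  Nontrivial V ∧ ∀ u v : V, u ≠ v → G.HasEDP u v k ∧ ¬ G.HasEDP u v (k + 1)

/-- The degree of a vertex: the number of edges incident to it. -/
noncomputable def degree (G : Multigraph V) (v : V) : ℕ :=
  {e : G.Edge | v ∈ G.ends e}.ncard

/-- Two vertices are adjacent if some edge joins them. -/
def Adj (G : Multigraph V) (u v : V) : Prop := ∃ e : G.Edge, G.ends e = s(u, v)

/-- `G` restricted to `S` is connected (witnessed by walks staying inside `S`). -/
def ConnectedOn (G : Multigraph V) (S : Set V) : Prop :=
  ∀ u ∈ S, ∀ v ∈ S, ∃ p : G.Walk u v, ∀ x ∈ p.support, x ∈ S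

/-- A multigraph is connected if it is nonempty and any two vertices are
joined by a walk. -/
def Connected (G : Multigraph V) : Prop :=
  Nonempty V ∧ ∀ u v : V, Nonempty (G.Walk u v)

/-- A multigraph is 2-vertex-connected (biconnected) if it is connected and
removing any single vertex leaves it connected. -/
def Biconnected (G : Multigraph V) : Prop :=
  G.Connected ∧ ∀ x : V, G.ConnectedOn {x}ᶜ

/-- A closed walk is a cycle if it repeats no edge, repeats no vertex except
the base point, and has length at least 2 (a double edge is a cycle of
length 2; loops are excluded since multigraphs are loopless). -/
def IsCycle {G : Multigraph V} {v : V} (p : G.Walk v v) : Prop :=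
  p.edges.Nodup ∧ p.support.tail.Nodup ∧ 2 ≤ p.edges.length

/-- A closed walk is chordless if no edge outside of it joins two of its
vertices (a parallel copy of one of its edges counts as a chord). -/
def IsChordless {G : Multigraph V} {v : V} (p : G.Walk v v) : Prop :=
  ∀ e : G.Edge, e ∉ p.edges → ∀ x y : V, G.ends e = s(x, y) →
    x ∈ p.support → y ∈ p.support → False

/-- `G.ReachAvoid S x y`: there is a walk from `x` to `y` avoiding the set `S`. -/
def ReachAvoid (G : Multigraph V) (S : Set V) (x y : V) : Prop :=
  ∃ p : G.Walk x y, ∀ z ∈ p.support, z ∉ S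

/-- The vertex sets of the connected components of `G ∖ S`.  For a cycle (or
any subgraph) `C`, the `C`-partition of the paper consists of `C` together
with these components; its size is the number of components. -/
def componentsAvoiding (G : Multigraph V) (S : Set V) : Set (Set V) :=
  {T | ∃ x, x ∉ S ∧ T = {y | G.ReachAvoid S x y}}

/-- Contract the (nonempty) vertex set `S` of `G` to a single new vertex
(`none`), deleting the edges inside `S`. -/
noncomputable def contractSet (G : Multigraph V) (S : Set V) :
    Multigraph (Option {x : V // x ∉ S}) where
  Edge := {e : G.Edge // ¬ ∀ x ∈ G.ends e, x ∈ S}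
  ends e := (G.ends e.1).map fun x => if h : x ∈ S then none else some ⟨x, h⟩
  loopless := by
    rintro ⟨e, he⟩ hd
    obtain ⟨x, y, hxy⟩ := exists_pair_eq (G.ends e)
    have hxyne : x ≠ y := by
      have h0 := G.loopless e
      rw [hxy, Sym2.mk_isDiag_iff] at h0
      exact h0
    have hor : x ∉ S ∨ y ∉ S := by
      by_contra hcon
      push_neg at hcon
      refine he fun z hz => ?_
      rw [hxy, Sym2.mem_iff] at hz
      rcases hz with rfl | rfl
      exacts [hcon.1, hcon.2]
    simp only [hxy, Sym2.map_pair_eq, Sym2.mk_isDiag_iff] at hd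
    rcases hor with hx | hy
    · rw [dif_neg hx] at hd
      by_cases hy : y ∈ S
      · rw [dif_pos hy] at hd; exact nomatch hd
      · rw [dif_neg hy] at hd
        exact hxyne (congrArg Subtype.val (Option.some_injective _ hd))
    · rw [dif_neg hy] at hd
      by_cases hx : x ∈ S
      · rw [dif_pos hx] at hd; exact nomatch hd
      · rw [dif_neg hx] at hd
        exact hxyne (congrArg Subtype.val (Option.some_injective _ hd))
  edge_finite := by
    have := G.edge_finite
    exact inferInstance

/-- The subgraph of `G` induced by the vertex set `S`. -/
noncomputable def induce (G : Multigraph V) (S : Set V) : Multigraph ↥S where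
  Edge := {e : G.Edge // ∀ x ∈ G.ends e, x ∈ S}
  ends e := sym2RestrictP (· ∈ S) (G.ends e.1) e.2
  loopless := fun e => sym2RestrictP_not_isDiag _ _ _ (G.loopless e.1)
  edge_finite := by
    have := G.edge_finite
    exact inferInstance

/-- Isomorphism of multigraphs. -/
structure Iso {V W : Type} (G : Multigraph V) (H : Multigraph W) where
  vmap : V ≃ W
  emap : G.Edge ≃ H.Edge
  ends_vmap : ∀ e : G.Edge, H.ends (emap e) = (G.ends e).map vmap

/-- `G` is quasi `k`-regular: at most one vertex has degree different from `k`. -/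
def QuasiRegular (G : Multigraph V) (k : ℕ) : Prop :=
  {v : V | G.degree v ≠ k}.Subsingleton

end Multigraph
namespace Multigraph

open scoped Classical

variable {V : Type}

/-- Block gluing: identify the vertex `u₁` of `G₁` with the vertex `u₂` of `G₂`
(the identified vertex is represented by `Sum.inl u₁`), keeping all edges. -/
noncomputable def blockGlue {V₁ V₂ : Type} (G₁ : Multigraph V₁) (G₂ : Multigraph V₂)
    (u₁ : V₁) (u₂ : V₂) : Multigraph (V₁ ⊕ {y : V₂ // y ≠ u₂}) where
  Edge := G₁.Edge ⊕ G₂.Edge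
  ends e :=
    match e with
    | .inl e => (G₁.ends e).map Sum.inl
    | .inr e => (G₂.ends e).map fun y => if h : y = u₂ then Sum.inl u₁ else Sum.inr ⟨y, h⟩
  loopless := by
    rintro (e | e) hd
    · exact map_not_isDiag _ _ (fun x _ y _ h => Sum.inl_injective h) (G₁.loopless e) hd
    · refine map_not_isDiag _ _ (fun x _ y _ h => ?_) (G₂.loopless e) hd
      by_cases hx : x = u₂ <;> by_cases hy : y = u₂
      · rw [hx, hy]
      · simp [hx, hy] at h
      · simp [hx, hy] at h
      · simp [hx, hy] at h
        exact h
  edge_finite := by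
    have := G₁.edge_finite; have := G₂.edge_finite
    exact inferInstance

/-- `k`-bridge addition: add a new vertex (`none`) joined to the existing
vertex `v` by `k` parallel edges. -/
def bridgeAdd (G : Multigraph V) (v : V) (k : ℕ) : Multigraph (Option V) where
  Edge := G.Edge ⊕ Fin k
  ends e :=
    match e with
    | .inl e => (G.ends e).map some
    | .inr _ => s(none, some v)
  loopless := by
    rintro (e | i) hd
    · exact map_not_isDiag _ _ (fun x _ y _ h => Option.some_injective _ h) (G.loopless e) hd
    · rw [Sym2.mk_isDiag_iff] at hd
      exact nomatch hd
  edge_finite := by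
    have := G.edge_finite
    exact inferInstance

end Multigraph
namespace Multigraph

open scoped Classical

variable {V : Type}

lemma other_ne {G : Multigraph V} {u : V} {e : G.Edge} (h : u ∈ G.ends e) :
    Sym2.Mem.other h ≠ u := by
  intro heq
  have hs := Sym2.other_spec h
  rw [heq] at hs
  have hl := G.loopless e
  rw [← hs, Sym2.mk_isDiag_iff] at hl
  exact hl rfl

/-- Vertex gluing: given vertices `u₁` of `G₁` and `u₂` of `G₂`, both of degree
`k` (witnessed by enumerations `ι₁`, `ι₂` of their incident edges), delete
`u₁` and `u₂` and join, for each `i`, the other endpoint of the `i`-th edge at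
`u₁` to the other endpoint of the `i`-th edge at `u₂`. -/
noncomputable def vertexGlue {V₁ V₂ : Type} (G₁ : Multigraph V₁) (G₂ : Multigraph V₂)
    (u₁ : V₁) (u₂ : V₂) {k : ℕ}
    (ι₁ : Fin k ≃ {e : G₁.Edge // u₁ ∈ G₁.ends e})
    (ι₂ : Fin k ≃ {e : G₂.Edge // u₂ ∈ G₂.ends e}) :
    Multigraph ({x : V₁ // x ≠ u₁} ⊕ {y : V₂ // y ≠ u₂}) where
  Edge := {e : G₁.Edge // u₁ ∉ G₁.ends e} ⊕ {e : G₂.Edge // u₂ ∉ G₂.ends e} ⊕ Fin k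
  ends e :=
    match e with
    | .inl e =>
        (sym2RestrictP (· ≠ u₁) (G₁.ends e.1) fun x hx hxe => e.2 (hxe ▸ hx)).map Sum.inl
    | .inr (.inl e) =>
        (sym2RestrictP (· ≠ u₂) (G₂.ends e.1) fun y hy hye => e.2 (hye ▸ hy)).map Sum.inr
    | .inr (.inr i) =>
        s(Sum.inl ⟨Sym2.Mem.other (ι₁ i).2, other_ne (ι₁ i).2⟩,
          Sum.inr ⟨Sym2.Mem.other (ι₂ i).2, other_ne (ι₂ i).2⟩)
  loopless := by
    rintro (e | e | i) hd
    · exact map_not_isDiag _ _ (fun x _ y _ h => Sum.inl_injective h)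
        (sym2RestrictP_not_isDiag _ _ _ (G₁.loopless e.1)) hd
    · exact map_not_isDiag _ _ (fun x _ y _ h => Sum.inr_injective h)
        (sym2RestrictP_not_isDiag _ _ _ (G₂.loopless e.1)) hd
    · rw [Sym2.mk_isDiag_iff] at hd
      exact nomatch hd
  edge_finite := by
    have := G₁.edge_finite; have := G₂.edge_finite
    exact inferInstance

/-- Cycle expansion: replace the vertex `u`, of degree `d` with incident edges
enumerated by `ι`, by a cycle on `d'` new vertices `u_0, …, u_{d'-1}`
(`2 ≤ d' ≤ d`); the `i`-th former edge at `u` is attached to `u_i` for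
`i < d' - 1` and to `u_{d'-1}` for `i ≥ d' - 1`, so each of `u_0, …, u_{d'-2}`
receives exactly one of them and `u_{d'-1}` receives the rest. -/
noncomputable def cycleExpand (G : Multigraph V) (u : V) {d d' : ℕ}
    (h2 : 2 ≤ d') (hdd : d' ≤ d)
    (ι : Fin d ≃ {e : G.Edge // u ∈ G.ends e}) :
    Multigraph ({x : V // x ≠ u} ⊕ Fin d') where
  Edge := {e : G.Edge // u ∉ G.ends e} ⊕ (Fin d ⊕ Fin d')
  ends e :=
    match e with
    | .inl e =>
        (sym2RestrictP (· ≠ u) (G.ends e.1) fun x hx hxe => e.2 (hxe ▸ hx)).map Sum.inl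
    | .inr (.inl i) =>
        s(Sum.inr ⟨min i.1 (d' - 1), by omega⟩,
          Sum.inl ⟨Sym2.Mem.other (ι i).2, other_ne (ι i).2⟩)
    | .inr (.inr j) =>
        s(Sum.inr j, Sum.inr ⟨(j.1 + 1) % d', Nat.mod_lt _ (by omega)⟩)
  loopless := by
    rintro (e | i | j) hd
    · exact map_not_isDiag _ _ (fun x _ y _ h => Sum.inl_injective h)
        (sym2RestrictP_not_isDiag _ _ _ (G.loopless e.1)) hd
    · rw [Sym2.mk_isDiag_iff] at hd
      exact nomatch hd
    · rw [Sym2.mk_isDiag_iff] at hd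
      have hj : j.1 < d' := j.2
      have := congrArg Fin.val (Sum.inr_injective hd)
      simp only at this
      rcases Nat.lt_or_ge (j.1 + 1) d' with h | h
      · rw [Nat.mod_eq_of_lt h] at this; omega
      · have hj1 : j.1 + 1 = d' := by omega
        rw [hj1, Nat.mod_self] at this; omega
  edge_finite := by
    have := G.edge_finite
    exact inferInstance

end Multigraph
namespace Multigraph

open scoped Classical

variable {V : Type}

/-- The edges of `G` crossing the vertex bipartition `⟨A, Aᶜ⟩`. -/
def cutEdges (G : Multigraph V) (A : Set V) : Set G.Edge :=
  {e | (∃ x ∈ G.ends e, x ∈ A) ∧ ∃ y ∈ G.ends e, y ∉ A}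

/-- The bipartition `⟨A, Aᶜ⟩` is a minimum edge cut of `G`: both sides are
nonempty and no other bipartition has fewer crossing edges. -/
def IsMinCut (G : Multigraph V) (A : Set V) : Prop :=
  A.Nonempty ∧ Aᶜ.Nonempty ∧
    ∀ B : Set V, B.Nonempty → Bᶜ.Nonempty →
      (G.cutEdges A).ncard ≤ (G.cutEdges B).ncard

/-- One side of a vertex splitting: keep the side `A` of the cut `⟨A, Aᶜ⟩`,
delete the other side, and reattach each cut edge to a single new vertex
(`none`). -/
noncomputable def splitSide (G : Multigraph V) (A : Set V) :
    Multigraph (Option {x : V // x ∈ A}) where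
  Edge := {e : G.Edge // ∀ x ∈ G.ends e, x ∈ A} ⊕ {e : G.Edge // e ∈ G.cutEdges A}
  ends e :=
    match e with
    | .inl e => (sym2RestrictP (· ∈ A) (G.ends e.1) e.2).map some
    | .inr e =>
        s(none, some ⟨Classical.choose e.2.1, (Classical.choose_spec e.2.1).2⟩)
  loopless := by
    rintro (e | e) hd
    · exact map_not_isDiag _ _ (fun x _ y _ h => Option.some_injective _ h)
        (sym2RestrictP_not_isDiag _ _ _ (G.loopless e.1)) hd
    · rw [Sym2.mk_isDiag_iff] at hd
      exact nomatch hd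
  edge_finite := by
    have := G.edge_finite
    exact inferInstance

/-- The dumbbell graph: two vertices joined by three parallel edges. -/
def dumbbell : Multigraph (Fin 2) where
  Edge := Fin 3
  ends _ := s(0, 1)
  loopless := fun _ h => absurd (Sym2.mk_isDiag_iff.mp h) (by decide)
  edge_finite := inferInstance

/-- `B` is (the vertex set of) a block of `G`: a maximal set of vertices
inducing a connected, 2-vertex-connected subgraph. -/
def IsBlock (G : Multigraph V) (B : Set V) : Prop :=
  (G.induce B).Biconnected ∧
    ∀ B' : Set V, B ⊆ B' → (G.induce B').Biconnected → B' = B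

/-- The set of double edges of `G`, as unordered pairs of distinct parallel
edges. -/
def doubleEdges (G : Multigraph V) : Set (Sym2 G.Edge) :=
  {z | ∃ e f : G.Edge, z = s(e, f) ∧ e ≠ f ∧ G.ends e = G.ends f}

/-- A collapsible cycle: a chordless, non-articulation cycle, all but at most
one of whose vertices have degree 3, whose contraction to a single vertex
yields an exactly 3-edge-connected multigraph. -/
def IsCollapsible {G : Multigraph V} {v : V} (p : G.Walk v v) : Prop :=
  IsCycle p ∧ IsChordless p ∧
    (G.componentsAvoiding {x | x ∈ p.support}).Subsingleton ∧
    {x : V | x ∈ p.support ∧ G.degree x ≠ 3}.Subsingleton ∧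
    (G.contractSet {x | x ∈ p.support}).ExactlyEdgeConnected 3

end Multigraph
namespace Multigraph

open scoped Classical

variable {V : Type}

/-- Smooth out the degree-two vertex `x` (whose two incident edges are
`e₁ = (x, a)` and `e₂ = (x, b)`): delete `x`, `e₁` and `e₂` and add a single
new edge joining `a` and `b`. -/
noncomputable def smoothAt {S : Set V} (H : Multigraph ↥S) (x a b : ↥S)
    (e₁ e₂ : H.Edge) (hne : e₁ ≠ e₂)
    (h₁ : H.ends e₁ = s(x, a)) (h₂ : H.ends e₂ = s(x, b))
    (hax : a ≠ x) (hbx : b ≠ x) (hab : a ≠ b)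
    (hdeg : ∀ e : H.Edge, x ∈ H.ends e → e = e₁ ∨ e = e₂) :
    Multigraph ↥(S \ {(x : V)}) where
  Edge := {e : H.Edge // e ≠ e₁ ∧ e ≠ e₂} ⊕ Unit
  ends e :=
    match e with
    | .inl e =>
        (sym2RestrictP (fun y : ↥S => y ≠ x) (H.ends e.1)
            (fun y hy hyx => by
              subst hyx
              rcases hdeg e.1 hy with h | h
              exacts [e.2.1 h, e.2.2 h])).map
          fun y => ⟨y.1.1, y.1.2, fun hh => y.2 (Subtype.ext hh)⟩
    | .inr _ =>
        s(⟨a.1, a.2, fun hh => hax (Subtype.ext hh)⟩,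
          ⟨b.1, b.2, fun hh => hbx (Subtype.ext hh)⟩)
  loopless := by
    rintro (e | e) hd
    · refine map_not_isDiag _ _ (fun y _ z _ h => ?_)
        (sym2RestrictP_not_isDiag _ _ _ (H.loopless e.1)) hd
      have hv := Subtype.ext_iff.mp h
      exact Subtype.ext (Subtype.ext hv)
    · rw [Sym2.mk_isDiag_iff] at hd
      have hv := Subtype.ext_iff.mp hd
      exact hab (Subtype.ext hv)
  edge_finite := by
    have := H.edge_finite
    exact inferInstance

/-- `SmoothSeq H K` : the multigraph `K` is obtained from `H` by a finite
sequence of smoothings of degree-two vertices. -/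
inductive SmoothSeq {V : Type} : ∀ {S T : Set V}, Multigraph ↥S → Multigraph ↥T → Prop
  | refl {S : Set V} (H : Multigraph ↥S) : SmoothSeq H H
  | step {S T : Set V} {H : Multigraph ↥S} {K : Multigraph ↥T}
      (x a b : ↥S) (e₁ e₂ : H.Edge) (hne : e₁ ≠ e₂)
      (h₁ : H.ends e₁ = s(x, a)) (h₂ : H.ends e₂ = s(x, b))
      (hax : a ≠ x) (hbx : b ≠ x) (hab : a ≠ b)
      (hdeg : ∀ e : H.Edge, x ∈ H.ends e → e = e₁ ∨ e = e₂) :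
      SmoothSeq (smoothAt H x a b e₁ e₂ hne h₁ h₂ hax hbx hab hdeg) K → SmoothSeq H K

/-- `G` is a 3-thick tree: it is obtained from a tree by replacing every tree
edge by three parallel edges. -/
def IsThreeThickTree (G : Multigraph V) : Prop :=
  ∃ T : SimpleGraph V, T.IsTree ∧
    ∃ f : G.Edge ≃ T.edgeSet × Fin 3, ∀ e : G.Edge, G.ends e = ((f e).1 : Sym2 V)

/-- The graphs obtainable from dumbbell graphs by cycle expansions and block
gluings (up to isomorphism). -/
inductive Synth3 : ∀ {V : Type}, Multigraph V → Prop
  | dumbbell : Synth3 dumbbell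
  | glue {V₁ V₂ : Type} {G₁ : Multigraph V₁} {G₂ : Multigraph V₂} (u₁ : V₁) (u₂ : V₂) :
      Synth3 G₁ → Synth3 G₂ → Synth3 (blockGlue G₁ G₂ u₁ u₂)
  | expand {V : Type} {G : Multigraph V} (u : V) {d d' : ℕ} (h2 : 2 ≤ d') (hdd : d' ≤ d)
      (ι : Fin d ≃ {e : G.Edge // u ∈ G.ends e}) :
      Synth3 G → Synth3 (G.cycleExpand u h2 hdd ι)
  | iso {V W : Type} {G : Multigraph V} {H : Multigraph W} :
      Synth3 G → Iso G H → Synth3 H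

/-- The graphs obtainable from 3-thick trees by block-respecting cycle
expansions (cycle expansions whose new cycle lies inside a single block of the
resulting graph), up to isomorphism. -/
inductive BRSynth : ∀ {V : Type}, Multigraph V → Prop
  | base {V : Type} {G : Multigraph V} : IsThreeThickTree G → BRSynth G
  | expand {V : Type} {G : Multigraph V} (u : V) {d d' : ℕ} (h2 : 2 ≤ d') (hdd : d' ≤ d)
      (ι : Fin d ≃ {e : G.Edge // u ∈ G.ends e})
      (hblock : ∃ B : Set ({x : V // x ≠ u} ⊕ Fin d'),
        (G.cycleExpand u h2 hdd ι).IsBlock B ∧ ∀ j : Fin d', Sum.inr j ∈ B) :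
      BRSynth G → BRSynth (G.cycleExpand u h2 hdd ι)
  | iso {V W : Type} {G : Multigraph V} {H : Multigraph W} :
      BRSynth G → Iso G H → BRSynth H

end Multigraph

/-!
Edge-disjoint trails of `G` lift to `G.bridgeAdd v k`, and `k` of them leaving `v` extend
along the `k` distinct bridge edges to the new vertex. Conversely, contracting the bridge
edges projects edge-disjoint trails between old vertices to edge-disjoint trails of `G`, and
edge-disjoint trails from the new vertex begin with distinct bridge edges, so there are at
most `k` of them.
-/

namespace Multigraph

variable {V W : Type}

namespace Walk

variable {G : Multigraph V}

def append : ∀ {a b c : V}, G.Walk a b → G.Walk b c → G.Walk a c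
  | _, _, _, nil _, q => q
  | _, _, _, cons e he p, q => cons e he (p.append q)

@[simp]
lemma edges_append : ∀ {a b c : V} (p : G.Walk a b) (q : G.Walk b c),
    (p.append q).edges = p.edges ++ q.edges
  | _, _, _, nil _, _ => rfl
  | _, _, _, cons e _ p, q => by simp [append, edges, edges_append p q]

def reverse : ∀ {a b : V}, G.Walk a b → G.Walk b a
  | _, _, nil a => nil a
  | _, _, cons e he p => p.reverse.append (cons e (he.trans Sym2.eq_swap) (nil _))

@[simp]
lemma edges_reverse : ∀ {a b : V} (p : G.Walk a b), p.reverse.edges = p.edges.reverse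
  | _, _, nil _ => rfl
  | _, _, cons e _ p => by simp [reverse, edges, edges_reverse p]

end Walk

variable {G : Multigraph V} {H : Multigraph W}

def IsEdgeDisjointTrails {a b : V} {n : ℕ} (P : Fin n → G.Walk a b) : Prop :=
  (∀ i, (P i).edges.Nodup) ∧ ∀ i j, i ≠ j → ∀ e, e ∈ (P i).edges → e ∉ (P j).edges

lemma hasEDP_iff {a b : V} {n : ℕ} :
    G.HasEDP a b n ↔ ∃ P : Fin n → G.Walk a b, IsEdgeDisjointTrails P :=
  Iff.rfl

namespace IsEdgeDisjointTrails

variable {a b : V} {n : ℕ} {P : Fin n → G.Walk a b}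

lemma filterMap (hP : IsEdgeDisjointTrails P) {a' b' : W} {Q : Fin n → H.Walk a' b'}
    (g : G.Edge → Option H.Edge) (hg : ∀ e e' c, c ∈ g e → c ∈ g e' → e = e')
    (hQ : ∀ i, (Q i).edges = (P i).edges.filterMap g) : IsEdgeDisjointTrails Q := by
  refine ⟨fun i => hQ i ▸ (hP.1 i).filterMap hg, fun i j hij c hci hcj => ?_⟩
  rw [hQ, List.mem_filterMap] at hci hcj
  obtain ⟨e, he, hce⟩ := hci
  obtain ⟨e', he', hce'⟩ := hcj
  exact hP.2 i j hij e he (hg e' e c hce' hce ▸ he')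

lemma reverse (hP : IsEdgeDisjointTrails P) : IsEdgeDisjointTrails fun i => (P i).reverse := by
  simpa [IsEdgeDisjointTrails] using hP

lemma cons (hP : IsEdgeDisjointTrails P) {w : V} (f : Fin n → G.Edge)
    (hf : Function.Injective f) (hends : ∀ i, G.ends (f i) = s(w, a))
    (hfP : ∀ i j, f i ∉ (P j).edges) :
    IsEdgeDisjointTrails fun i => Walk.cons (f i) (hends i) (P i) := by
  refine ⟨fun i => List.nodup_cons.mpr ⟨hfP i i, hP.1 i⟩, fun i j hij e hei hej => ?_⟩
  simp only [Walk.edges, List.mem_cons] at hei hej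
  rcases hei with rfl | hei <;> rcases hej with hej | hej
  · exact hij (hf hej)
  · exact hfP i j hej
  · exact hfP j i (hej ▸ hei)
  · exact hP.2 i j hij e hei hej

lemma map (hP : IsEdgeDisjointTrails P) {a' b' : W} {Q : Fin n → H.Walk a' b'}
    (φ : G.Edge → H.Edge) (hφ : Function.Injective φ)
    (hQ : ∀ i, (Q i).edges = (P i).edges.map φ) : IsEdgeDisjointTrails Q :=
  hP.filterMap (some ∘ φ)
    (fun _ _ _ h h' => hφ ((Option.some.inj h).trans (Option.some.inj h').symm))
    fun i => by rw [hQ, List.filterMap_eq_map]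

end IsEdgeDisjointTrails

lemma hasEDP_self (a : V) (n : ℕ) : G.HasEDP a a n :=
  ⟨fun _ => .nil a, fun _ => List.nodup_nil, fun _ _ _ _ he => (List.not_mem_nil he).elim⟩

lemma HasEDP.symm {a b : V} {n : ℕ} (h : G.HasEDP a b n) : G.HasEDP b a n := by
  obtain ⟨P, hP⟩ := hasEDP_iff.mp h
  exact ⟨_, hP.reverse⟩

lemma HasEDP.le_of_forall_exists_mem {a b : V} {n m : ℕ} (h : G.HasEDP a b n)
    (f : Fin m → G.Edge) (hf : ∀ p : G.Walk a b, ∃ j, f j ∈ p.edges) : n ≤ m := by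
  obtain ⟨P, -, hdisj⟩ := h
  choose g hg using fun i => hf (P i)
  have hinj : Function.Injective g := fun i i' hii' => by
    by_contra hne
    exact hdisj i i' hne _ (hg i) (hii' ▸ hg i')
  simpa using Fintype.card_le_of_injective g hinj

variable (G) (v : V) (k : ℕ)

def liftWalk : ∀ {x y : V}, G.Walk x y → (G.bridgeAdd v k).Walk (some x) (some y)
  | _, _, .nil x => .nil (some x)
  | _, _, .cons e he p =>
      .cons (Sum.inl e) (show (G.ends e).map some = _ by rw [he, Sym2.map_mk])
        (liftWalk p)

@[simp]
lemma edges_liftWalk : ∀ {x y : V} (p : G.Walk x y),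
    (G.liftWalk v k p).edges = p.edges.map Sum.inl
  | _, _, .nil _ => rfl
  | _, _, .cons e _ p => congrArg (Sum.inl e :: ·) (edges_liftWalk p)

/-- Sending the new vertex to `v` and deleting the bridge edges projects walks of
`G.bridgeAdd v k` to walks of `G`. -/
lemma exists_walk_edges_eq_filterMap_getLeft {a b : Option V}
    (p : (G.bridgeAdd v k).Walk a b) :
    ∃ q : G.Walk (a.getD v) (b.getD v), q.edges = p.edges.filterMap Sum.getLeft? := by
  induction p with
  | nil a => exact ⟨.nil _, rfl⟩
  | @cons a c b e he p ih =>
    obtain ⟨q, hq⟩ := ih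
    have hends : ((G.bridgeAdd v k).ends e).map (·.getD v) = s(a.getD v, c.getD v) := by
      rw [he, Sym2.map_mk]
    rcases e with e | i
    · have he' : G.ends e = s(a.getD v, c.getD v) := by
        simpa [bridgeAdd, Sym2.map_map] using hends
      exact ⟨.cons e he' q, congrArg (e :: ·) hq⟩
    · have hac : a.getD v = c.getD v := by
        obtain ⟨ha, hc⟩ | ⟨ha, hc⟩ := Sym2.eq_iff.mp hends.symm <;>
          simp_all [bridgeAdd]
      rw [hac]
      exact ⟨q, hq⟩

variable {G v k}

lemma hasEDP_bridgeAdd_some_iff {x y : V} {n : ℕ} :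
    (G.bridgeAdd v k).HasEDP (some x) (some y) n ↔ G.HasEDP x y n := by
  constructor
  · intro h
    obtain ⟨P, hP⟩ := hasEDP_iff.mp h
    choose Q hQ using fun i => G.exists_walk_edges_eq_filterMap_getLeft v k (P i)
    refine ⟨Q, hP.filterMap Sum.getLeft? ?_ hQ⟩
    rintro (e | e) (e' | e') c ⟨⟩ ⟨⟩
    rfl
  · intro h
    obtain ⟨P, hP⟩ := hasEDP_iff.mp h
    exact ⟨_, hP.map Sum.inl Sum.inl_injective fun i => G.edges_liftWalk v k (P i)⟩

lemma hasEDP_bridgeAdd_none_some {y : V} (h : G.HasEDP v y k) :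
    (G.bridgeAdd v k).HasEDP none (some y) k := by
  obtain ⟨Q, hQ⟩ := hasEDP_iff.mp h
  have hlift : IsEdgeDisjointTrails fun i => G.liftWalk v k (Q i) :=
    hQ.map Sum.inl Sum.inl_injective fun i => G.edges_liftWalk v k (Q i)
  refine ⟨_, hlift.cons Sum.inr Sum.inr_injective (fun _ => rfl) fun i j hi => ?_⟩
  obtain ⟨e, -, he⟩ := List.mem_map.mp (edges_liftWalk G v k (Q j) ▸ hi)
  cases he

/-- Every walk leaving the new vertex starts with a bridge edge. -/
lemma not_hasEDP_bridgeAdd_none_some_succ {y : V} :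
    ¬ (G.bridgeAdd v k).HasEDP none (some y) (k + 1) := by
  intro h
  refine absurd (h.le_of_forall_exists_mem Sum.inr fun p => ?_) (Nat.not_succ_le_self k)
  cases p with
  | cons e he p =>
    rcases e with e | i
    · have : none ∈ (G.bridgeAdd v k).ends (.inl e) := by
        rw [he]
        exact Sym2.mem_mk_left _ _
      simp [bridgeAdd] at this
    · exact ⟨i, List.mem_cons_self⟩

/-- **`k`-bridge addition preserves exact `k`-edge-connectivity.**  If `G₁` is
exactly `k`-edge-connected, `v` is a vertex of `G₁`, and `G` is obtained from
`G₁` by adding one new vertex joined to `v` by `k` parallel edges, then `G` is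
exactly `k`-edge-connected. -/
theorem bridgeAdd_exactlyEdgeConnected {V₁ : Type} (G₁ : Multigraph V₁) (v : V₁)
    (k : ℕ) (h : G₁.ExactlyEdgeConnected k) :
    (G₁.bridgeAdd v k).ExactlyEdgeConnected k := by
  obtain ⟨-, hG⟩ := h
  have hnone : ∀ y, (G₁.bridgeAdd v k).HasEDP none (some y) k ∧
      ¬ (G₁.bridgeAdd v k).HasEDP none (some y) (k + 1) := fun y => by
    refine ⟨hasEDP_bridgeAdd_none_some ?_, not_hasEDP_bridgeAdd_none_some_succ⟩
    by_cases hvy : v = y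
    · exact hvy ▸ hasEDP_self v k
    · exact (hG v y hvy).1
  refine ⟨⟨none, some v, nofun⟩, ?_⟩
  rintro (_ | x) (_ | y) hxy
  · exact absurd rfl hxy
  · exact hnone y
  · exact (hnone x).imp HasEDP.symm (mt HasEDP.symm)
  · simp only [hasEDP_bridgeAdd_some_iff]
    exact hG x y (by rintro rfl; exact hxy rfl)

end Multigraph
end

section
/- Let G = (V, E) be a quasi 3-regular, exactly 3-edge-connected, 2-vertex-connected multigraph, and let C be a chordless cycle in G containing the vertex of degree greater than 3 (if one exists). Let G' be obtained from G by contracting C into a single vertex u (delete the vertices of C, add u, and replace each edge from a vertex of C to a vertex outside C by an edge from u to that vertex). Then G' is exactly 3-edge-connected and quasi 3-regular. -/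
/-!
Contracting the cycle `C` does not change the degree of any vertex outside `C`, and by
the hypothesis on high-degree vertices all of these have degree 3. Since every pair of
distinct vertices of the contraction contains a vertex outside `C`, there are never 4
edge-disjoint paths, while projecting the 3 edge-disjoint paths of `G` between
preimages gives 3 of them. The contraction is nontrivial because the base point of `C`
has degree at least 3 but only 2 cycle edges, and by chordlessness the remaining edge
leaves `C`.
-/

namespace Multigraph

variable {V : Type} {G : Multigraph V}

namespace Walk

def copy {a b a' b' : V} (w : G.Walk a b) (ha : a = a') (hb : b = b') : G.Walk a' b' :=
  ha ▸ hb ▸ w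

lemma edges_copy {a b a' b' : V} (w : G.Walk a b) (ha : a = a') (hb : b = b') :
    (w.copy ha hb).edges = w.edges := by
  subst ha hb; rfl

lemma support_eq_cons {a b : V} (w : G.Walk a b) : w.support = a :: w.support.tail := by
  cases w <;> rfl

lemma start_mem_support {a b : V} (w : G.Walk a b) : a ∈ w.support := by
  rw [support_eq_cons]; exact List.mem_cons_self

lemma exists_edge_incident_start {a b : V} (w : G.Walk a b) (hab : a ≠ b) :
    ∃ e ∈ w.edges, a ∈ G.ends e := by
  cases w with
  | nil => exact absurd rfl hab
  | cons e he q => exact ⟨e, List.mem_cons_self, he ▸ Sym2.mem_mk_left _ _⟩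

lemma exists_edge_incident_end :
    ∀ {a b : V} (w : G.Walk a b), a ≠ b → ∃ e ∈ w.edges, b ∈ G.ends e
  | _, _, .nil _, hab => absurd rfl hab
  | _, _, @Walk.cons _ _ a c b e he q, _ => by
    by_cases hcb : c = b
    · subst hcb
      exact ⟨e, List.mem_cons_self, he ▸ Sym2.mem_mk_right _ _⟩
    · obtain ⟨f, hf, hbf⟩ := exists_edge_incident_end q hcb
      exact ⟨f, List.mem_cons_of_mem _ hf, hbf⟩

open scoped Classical in
/-- Each visit of a walk to `u` accounts for at most two edge-incidences at `u`; the
endpoints contribute one each. -/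
lemma countP_incident_add_le (u : V) :
    ∀ {a b : V} (w : G.Walk a b),
      (w.edges.countP fun e => u ∈ G.ends e) + (if u = b then 1 else 0)
        ≤ (if u = a then 1 else 0) + 2 * w.support.tail.count u
  | _, _, .nil a => by simp [edges, support]
  | _, _, @Walk.cons _ _ a c b e he q => by
    have ih := countP_incident_add_le u q
    have hsupport : q.support.count u = (if u = c then 1 else 0) + q.support.tail.count u := by
      rw [support_eq_cons q, List.count_cons]
      by_cases h : u = c
      · simp [h, Nat.add_comm]
      · simp [h, Ne.symm h]
    have hends : (if u ∈ G.ends e then 1 else 0)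
        ≤ (if u = a then 1 else 0) + (if u = c then 1 else 0) := by
      by_cases hue : u ∈ G.ends e
      · rcases Sym2.mem_iff.mp (he ▸ hue) with rfl | rfl <;> simp [hue]
      · simp [hue]
    simp only [edges, List.countP_cons, support, List.tail_cons, hsupport, decide_eq_true_eq]
    omega

end Walk

lemma le_degree_of_injective {a : V} {k : ℕ} (f : Fin k → G.Edge)
    (hf : Function.Injective f) (ha : ∀ i, a ∈ G.ends (f i)) : k ≤ G.degree a := by
  rw [degree, ← Nat.card_coe_set_eq, ← Nat.card_fin k]
  exact Nat.card_le_card_of_injective (fun i => (⟨f i, ha i⟩ : {e : G.Edge | a ∈ G.ends e}))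
    fun i j hij => hf (congrArg Subtype.val hij)

lemma le_degree_of_pairwise_disjoint_edges {a b c : V} {k : ℕ} (P : Fin k → G.Walk a b)
    (hdisj : ∀ i j, i ≠ j → ∀ e, e ∈ (P i).edges → e ∉ (P j).edges)
    (hc : ∀ i, ∃ e ∈ (P i).edges, c ∈ G.ends e) : k ≤ G.degree c := by
  choose f hf hcf using hc
  refine le_degree_of_injective f (fun i j hij => ?_) hcf
  by_contra hne
  exact hdisj i j hne (f i) (hf i) (hij ▸ hf j)

lemma HasEDP.le_degree_left {a b : V} {k : ℕ} (h : G.HasEDP a b k) (hab : a ≠ b) :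
    k ≤ G.degree a :=
  let ⟨P, _, hdisj⟩ := h
  le_degree_of_pairwise_disjoint_edges P hdisj fun i => (P i).exists_edge_incident_start hab

lemma HasEDP.le_degree_right {a b : V} {k : ℕ} (h : G.HasEDP a b k) (hab : a ≠ b) :
    k ≤ G.degree b :=
  let ⟨P, _, hdisj⟩ := h
  le_degree_of_pairwise_disjoint_edges P hdisj fun i => (P i).exists_edge_incident_end hab

lemma ExactlyEdgeConnected.le_degree {k : ℕ} (hG : G.ExactlyEdgeConnected k) (u : V) :
    k ≤ G.degree u := by
  have := hG.1
  obtain ⟨w, hw⟩ := exists_ne u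
  exact (hG.2 u w hw.symm).1.le_degree_left hw.symm

lemma IsCycle.ncard_incident_le_two {v : V} {p : G.Walk v v} (hc : IsCycle p) (u : V) :
    {e : G.Edge | e ∈ p.edges ∧ u ∈ G.ends e}.ncard ≤ 2 := by
  classical
  have hvisits : p.support.tail.count u ≤ 1 := List.nodup_iff_count_le_one.mp hc.2.1 u
  have hcount := p.countP_incident_add_le u
  have hset : {e : G.Edge | e ∈ p.edges ∧ u ∈ G.ends e}
      = ↑(p.edges.filter fun e => u ∈ G.ends e).toFinset := by
    ext e; simp
  rw [hset, Set.ncard_coe_finset]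
  calc (p.edges.filter fun e => u ∈ G.ends e).toFinset.card
      ≤ (p.edges.filter fun e => u ∈ G.ends e).length := List.toFinset_card_le _
    _ = p.edges.countP fun e => u ∈ G.ends e := List.countP_eq_length_filter.symm
    _ ≤ 2 := by split_ifs at hcount <;> omega

lemma IsCycle.exists_incident_not_mem_edges {v : V} {p : G.Walk v v} (hc : IsCycle p)
    {u : V} (hu : 3 ≤ G.degree u) : ∃ e : G.Edge, u ∈ G.ends e ∧ e ∉ p.edges := by
  by_contra! hcon
  have hsub : {e : G.Edge | u ∈ G.ends e} ⊆ {e : G.Edge | e ∈ p.edges ∧ u ∈ G.ends e} :=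
    fun e he => ⟨hcon e he, he⟩
  have := Set.ncard_le_ncard hsub (Set.toFinite _)
  have := hc.ncard_incident_le_two u
  simp only [degree] at hu
  omega

lemma IsChordless.exists_not_mem_support {v : V} {p : G.Walk v v} (hch : IsChordless p)
    (hc : IsCycle p) {u : V} (hup : u ∈ p.support) (hu : 3 ≤ G.degree u) :
    ∃ w, w ∉ p.support := by
  obtain ⟨e, hue, hep⟩ := hc.exists_incident_not_mem_edges hu
  exact ⟨Sym2.Mem.other hue, fun hw => hch e hep u _ (Sym2.other_spec hue).symm hup hw⟩

open scoped Classical in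
noncomputable def contractMap (S : Set V) (x : V) : Option {y : V // y ∉ S} :=
  if h : x ∈ S then none else some ⟨x, h⟩

lemma contractMap_of_mem {S : Set V} {x : V} (hx : x ∈ S) : contractMap S x = none :=
  dif_pos hx

lemma contractMap_val {S : Set V} (x : {y : V // y ∉ S}) : contractMap S x.1 = some x :=
  dif_neg x.2

lemma eq_of_contractMap_eq_some {S : Set V} {x : V} {w : {y : V // y ∉ S}}
    (h : contractMap S x = some w) : x = w.1 := by
  unfold contractMap at h
  split at h
  · exact absurd h (by simp)
  · exact congrArg Subtype.val (Option.some_injective _ h)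

lemma contractMap_elim {S : Set V} {s : V} (hs : s ∈ S) (a : Option {y : V // y ∉ S}) :
    contractMap S (a.elim s Subtype.val) = a := by
  cases a with
  | none => exact contractMap_of_mem hs
  | some x => exact contractMap_val x

lemma contractSet_ends (S : Set V) (e : (G.contractSet S).Edge) :
    (G.contractSet S).ends e = (G.ends e.1).map (contractMap S) := rfl

open scoped Classical in
noncomputable def Walk.contract (S : Set V) :
    ∀ {a b : V}, G.Walk a b → (G.contractSet S).Walk (contractMap S a) (contractMap S b)
  | _, _, .nil a => .nil (contractMap S a)
  | _, _, @Walk.cons _ _ a c b e he q =>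
    if hS : ∀ x ∈ G.ends e, x ∈ S then
      (q.contract S).copy
        ((contractMap_of_mem (hS c (he ▸ Sym2.mem_mk_right a c))).trans
          (contractMap_of_mem (hS a (he ▸ Sym2.mem_mk_left a c))).symm) rfl
    else
      .cons (⟨e, hS⟩ : (G.contractSet S).Edge)
        (by show (G.ends e).map (contractMap S) = _; rw [he, Sym2.map_mk]) (q.contract S)

lemma Walk.contract_edges_sublist (S : Set V) :
    ∀ {a b : V} (w : G.Walk a b), ((w.contract S).edges.map Subtype.val).Sublist w.edges
  | _, _, .nil a => by simp [contract, edges]; rfl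
  | _, _, @Walk.cons _ _ a c b e he q => by
    rw [contract]
    split
    · rw [edges_copy]
      exact (contract_edges_sublist S q).trans (List.sublist_cons_self e q.edges)
    · simp only [edges]
      exact (contract_edges_sublist S q).cons_cons e

lemma HasEDP.contractSet {x y : V} {k : ℕ} (h : G.HasEDP x y k) (S : Set V) :
    (G.contractSet S).HasEDP (contractMap S x) (contractMap S y) k := by
  obtain ⟨P, hnodup, hdisj⟩ := h
  have hsub i := (P i).contract_edges_sublist S
  refine ⟨fun i => (P i).contract S, fun i => ((hsub i).nodup (hnodup i)).of_map _,
    fun i j hij e he he' => ?_⟩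
  exact hdisj i j hij e.1 ((hsub i).subset (List.mem_map_of_mem he))
    ((hsub j).subset (List.mem_map_of_mem he'))

lemma degree_contractSet_some (S : Set V) (x : {y : V // y ∉ S}) :
    (G.contractSet S).degree (some x) = G.degree x.1 := by
  rw [degree, degree, ← Nat.card_coe_set_eq, ← Nat.card_coe_set_eq]
  refine Nat.card_congr ⟨fun e => ⟨e.1.1, ?_⟩, fun e => ⟨⟨e.1, fun hall => x.2 (hall x.1 e.2)⟩, ?_⟩,
    fun _ => rfl, fun _ => rfl⟩
  · have hx : some x ∈ (G.ends e.1.1).map (contractMap S) := e.2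
    obtain ⟨y, hy, hxy⟩ := Sym2.mem_map.mp hx
    exact eq_of_contractMap_eq_some hxy ▸ hy
  · exact Sym2.mem_map.mpr ⟨x.1, e.2, contractMap_val x⟩

lemma exactlyEdgeConnected_contractSet {k : ℕ} {S : Set V} {s w : V} (hs : s ∈ S)
    (hw : w ∉ S) (hG : ∀ a b : V, a ≠ b → G.HasEDP a b k)
    (hdeg : ∀ x, x ∉ S → G.degree x = k) :
    (G.contractSet S).ExactlyEdgeConnected k := by
  refine ⟨⟨none, some ⟨w, hw⟩, nofun⟩, fun a b hab => ⟨?_, fun h => ?_⟩⟩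
  · have hne : a.elim s Subtype.val ≠ b.elim s Subtype.val := fun h =>
      hab (by rw [← contractMap_elim hs a, ← contractMap_elim hs b, h])
    simpa only [contractMap_elim hs] using (hG _ _ hne).contractSet S
  · obtain ⟨x, hx⟩ : ∃ x, some x = a ∨ some x = b := by
      cases a with
      | some x => exact ⟨x, .inl rfl⟩
      | none =>
        cases b with
        | some y => exact ⟨y, .inr rfl⟩
        | none => exact absurd rfl hab
    have hle : k + 1 ≤ G.degree x.1 := by
      rw [← degree_contractSet_some]
      rcases hx with rfl | rfl
      exacts [h.le_degree_left hab, h.le_degree_right hab]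
    have := hdeg x.1 x.2
    omega

lemma quasiRegular_contractSet {k : ℕ} {S : Set V} (hdeg : ∀ x, x ∉ S → G.degree x = k) :
    (G.contractSet S).QuasiRegular k :=
  Set.subsingleton_singleton.anti fun a ha => by
    cases a with
    | none => rfl
    | some x => exact absurd (by rw [degree_contractSet_some, hdeg x.1 x.2]) ha

theorem contract_cycle_exactlyEdgeConnected_general {V : Type} (G : Multigraph V)
    (hG : G.ExactlyEdgeConnected 3)
    {v : V} (p : G.Walk v v) (hc : IsCycle p) (hch : IsChordless p)
    (hhigh : ∀ x : V, G.degree x ≠ 3 → x ∈ p.support) :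
    (G.contractSet {x | x ∈ p.support}).ExactlyEdgeConnected 3 ∧
      (G.contractSet {x | x ∈ p.support}).QuasiRegular 3 := by
  have hdeg : ∀ x, x ∉ {x | x ∈ p.support} → G.degree x = 3 := fun x hx =>
    not_not.mp (mt (hhigh x) hx)
  obtain ⟨w, hw⟩ := IsChordless.exists_not_mem_support hch hc p.start_mem_support (hG.le_degree v)
  exact ⟨exactlyEdgeConnected_contractSet p.start_mem_support hw
    (fun a b hab => (hG.2 a b hab).1) hdeg, quasiRegular_contractSet hdeg⟩

/-- **Cycle contraction.**  Let `G` be a quasi 3-regular, exactly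
3-edge-connected, 2-vertex-connected multigraph and let `C` be a chordless
cycle of `G` containing the vertex of degree different from 3 (if one
exists).  Then the graph obtained from `G` by contracting `C` to a single
vertex is exactly 3-edge-connected and quasi 3-regular. -/
theorem contract_cycle_exactlyEdgeConnected {V : Type} (G : Multigraph V)
    (hq : G.QuasiRegular 3) (hG : G.ExactlyEdgeConnected 3) (hbi : G.Biconnected)
    {v : V} (p : G.Walk v v) (hc : IsCycle p) (hch : IsChordless p)
    (hhigh : ∀ x : V, G.degree x ≠ 3 → x ∈ p.support) :
    (G.contractSet {x | x ∈ p.support}).ExactlyEdgeConnected 3 ∧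
      (G.contractSet {x | x ∈ p.support}).QuasiRegular 3 :=
  contract_cycle_exactlyEdgeConnected_general G hG p hc hch hhigh

end Multigraph
end
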